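/- arXiv:1903.01818 — 3 statements merged into one kernel-verified Lean document; each statement's English description precedes it below -/
import Mathlib

section
/- If z⁺ minimizes u ↦ φ(u) + D(u,z) over E, where φ is a proper convex function and D is the Bregman distance associated with a differentiable convex H, then for all u ∈ E: φ(u) + D(u,z) ≥ φ(z⁺) + D(z⁺,z) + D(u,z⁺). -/
/-!
Since `D (·) z` differs from `H` by an affine function, it is differentiable at `z⁺` with gradient
`∇H z⁺ - ∇H z`, and the first-order condition for minimizing the convex `φ` plus this smooth
function reads `φ z⁺ ≤ φ u + ⟪∇H z⁺ - ∇H z, u - z⁺⟫`. The three-point identity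
`D u z = D u z⁺ + D z⁺ z + ⟪∇H z⁺ - ∇H z, u - z⁺⟫` turns this into the claim.
-/

open Set

theorem ConvexOn.le_add_of_isMinOn_add {E : Type*} [NormedAddCommGroup E] [NormedSpace ℝ E]
    {s : Set E} {f g : E → ℝ} {g' : E →L[ℝ] ℝ} {x y : E} (hf : ConvexOn ℝ s f)
    (hg : HasFDerivAt g g' x) (hmin : IsMinOn (f + g) s x) (hx : x ∈ s) (hy : y ∈ s) :
    f x ≤ f y + g' (y - x) := by
  -- `ψ ≥ 0` on `[0, 1]` by convexity of `f` along the segment, and `ψ 0 = 0`.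
  set ψ : ℝ → ℝ := fun t => g (x + t • (y - x)) - g x + t * (f y - f x)
  have hψ_min : IsMinOn ψ (Icc 0 1) 0 := by
    rintro t ⟨ht0, ht1⟩
    have hw : x + t • (y - x) = (1 - t) • x + t • y := by module
    have hconv := hf.2 hx hy (sub_nonneg.2 ht1) ht0 (sub_add_cancel 1 t)
    have hle := hmin (hf.1 hx hy (sub_nonneg.2 ht1) ht0 (sub_add_cancel 1 t))
    simp only [Pi.add_apply, mem_ofPred_eq, smul_eq_mul] at hle hconv
    simp only [ψ, mem_ofPred_eq, zero_smul, add_zero, sub_self, zero_mul, hw]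
    nlinarith
  have hψ_deriv : HasDerivAt ψ (g' (y - x) + (f y - f x)) 0 := by
    have hline : HasDerivAt (fun t : ℝ => x + t • (y - x)) (y - x) 0 := by
      simpa using ((hasDerivAt_id (0 : ℝ)).smul_const (y - x)).const_add x
    have := ((hg.comp_hasDerivAt_of_eq 0 hline (by simp)).sub_const (g x)).add
      ((hasDerivAt_id' (0 : ℝ)).mul_const (f y - f x))
    rwa [one_mul] at this
  have := hψ_min.localize.hasFDerivWithinAt_nonneg hψ_deriv.hasFDerivAt.hasFDerivWithinAt
    (y := 1) (mem_posTangentConeAt_of_segment_subset (by simp [segment_eq_Icc]))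
  simp only [ContinuousLinearMap.toSpanSingleton_apply, one_smul] at this
  linarith

theorem bregman_three_point {E : Type*} [NormedAddCommGroup E] [InnerProductSpace ℝ E]
    [CompleteSpace E] {H : E → ℝ} {D : E → E → ℝ}
    (hD : ∀ u v, D u v = H u - H v - inner ℝ (gradient H v) (u - v)) (u v w : E) :
    D u w = D u v + D v w + inner ℝ (gradient H v - gradient H w) (u - v) := by
  have hsplit : u - w = (u - v) + (v - w) := by abel
  rw [hD u w, hD u v, hD v w, hsplit, inner_add_right, inner_sub_left]
  ring

theorem stmt_3_general {E : Type*} [NormedAddCommGroup E] [InnerProductSpace ℝ E]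
    [FiniteDimensional ℝ E] (H : E → ℝ) (hH : Differentiable ℝ H)
    (φ : E → ℝ) (hφ : ConvexOn ℝ Set.univ φ)
    (D : E → E → ℝ)
    (hD : ∀ u v, D u v = H u - H v - (inner ℝ (gradient H v) (u - v) : ℝ))
    (z zplus : E)
    (hmin : ∀ u : E, φ zplus + D zplus z ≤ φ u + D u z) :
    ∀ u : E, φ u + D u z ≥ φ zplus + D zplus z + D u zplus := by
  intro u
  have hderiv : HasFDerivAt (fun w => D w z)
      (fderiv ℝ H zplus - innerSL ℝ (gradient H z)) zplus := by
    simp only [hD, inner_sub_right]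
    exact ((hH zplus).hasFDerivAt.sub_const _).sub
      ((innerSL ℝ (gradient H z)).hasFDerivAt.sub_const _)
  have hopt := hφ.le_add_of_isMinOn_add hderiv (isMinOn_univ_iff.mpr hmin)
    (mem_univ zplus) (mem_univ u)
  rw [sub_apply, ← inner_gradient_left, innerSL_apply_apply,
    ← inner_sub_left] at hopt
  linarith [bregman_three_point hD u zplus z]

theorem stmt_3 {E : Type*} [NormedAddCommGroup E] [InnerProductSpace ℝ E]
    [FiniteDimensional ℝ E] (H : E → ℝ) (hH : Differentiable ℝ H)
    (hHconv : ConvexOn ℝ Set.univ H)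
    (φ : E → ℝ) (hφ : ConvexOn ℝ Set.univ φ)
    (D : E → E → ℝ)
    (hD : ∀ u v, D u v = H u - H v - (inner ℝ (gradient H v) (u - v) : ℝ))
    (z zplus : E)
    (hmin : ∀ u : E, φ zplus + D zplus z ≤ φ u + D u z) :
    ∀ u : E, φ u + D u z ≥ φ zplus + D zplus z + D u zplus :=
  stmt_3_general H hH φ hφ D hD z zplus hmin
end

section
/- Let (a_k) and (b_k) be sequences of nonnegative reals, F : ℕ → ℝ bounded below, δ > 1, and suppose for all k ≥ 1: F(k) + δ·a_{k+1} ≤ F(k-1) + a_k (with a_1 given). Then Σ_{k=1}^∞ a_k < ∞ and F(k) converges. -/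
theorem stmt_7 (a b : ℕ → ℝ) (F : ℕ → ℝ) (δ : ℝ)
    (ha : ∀ k, 0 ≤ a k) (hb : ∀ k, 0 ≤ b k)
    (hF : BddBelow (Set.range F)) (hδ : 1 < δ)
    (hrec : ∀ k ≥ 1, F k + δ * a (k + 1) ≤ F (k - 1) + a k) :
    Summable a ∧ ∃ l, Filter.Tendsto F Filter.atTop (nhds l) := by
  obtain ⟨m, hm⟩ := hF
  have hmF : ∀ k, m ≤ F k := fun k => hm ⟨k, rfl⟩
  set E : ℕ → ℝ := fun k => F k + a (k + 1) with hE
  have hstep : ∀ n, E (n + 1) + (δ - 1) * a (n + 2) ≤ E n := by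
    intro n
    have := hrec (n + 1) (by omega)
    simp only [Nat.add_sub_cancel] at this
    simp only [hE]
    nlinarith [ha (n + 2)]
  have hEanti : Antitone E := antitone_nat_of_succ_le fun n => by
    nlinarith [hstep n, ha (n + 2)]
  have hEbd : ∀ k, m ≤ E k := fun k => by
    have := ha (k + 1); have := hmF k; simp only [hE]; linarith
  -- summability
  have hsum : Summable (fun i => a (i + 2)) := by
    apply summable_of_sum_range_le (c := (E 0 - m) / (δ - 1)) (fun n => ha _)
    intro n
    have htel : ∑ i ∈ Finset.range n, (E i - E (i + 1)) = E 0 - E n :=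
      Finset.sum_range_sub' E n
    have hle : (δ - 1) * ∑ i ∈ Finset.range n, a (i + 2) ≤ E 0 - E n := by
      rw [← htel, Finset.mul_sum]
      apply Finset.sum_le_sum
      intro i _
      have := hstep i
      linarith
    have h1 : (δ - 1) * ∑ i ∈ Finset.range n, a (i + 2) ≤ E 0 - m := by
      have := hEbd n; linarith
    rw [le_div_iff₀ (by linarith : (0:ℝ) < δ - 1)]
    nlinarith [h1]
  have hsa : Summable a := by
    have := (summable_nat_add_iff 2).mpr hsum
    exact (summable_nat_add_iff 2).mp hsum
  refine ⟨hsa, ?_⟩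
  -- E converges
  have hEconv : ∃ l, Filter.Tendsto E Filter.atTop (nhds l) := by
    refine ⟨⨅ n, E n, tendsto_atTop_ciInf hEanti ⟨m, ?_⟩⟩
    rintro x ⟨k, rfl⟩; exact hEbd k
  obtain ⟨l, hl⟩ := hEconv
  have ha0 : Filter.Tendsto (fun k => a (k + 1)) Filter.atTop (nhds 0) := by
    have := hsa.tendsto_atTop_zero
    exact this.comp (Filter.tendsto_add_atTop_nat 1)
  refine ⟨l, ?_⟩
  have : F = fun k => E k - a (k + 1) := by funext k; simp [hE]
  rw [this]
  simpa using hl.sub ha0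
end

section
/- Let (Δ_k) be a nonnegative nonincreasing sequence satisfying Δ_k ≤ (Δ_{k-1} - Δ_k) + C(Δ_{k-1} - Δ_k)^θ for all k ≥ 1, with constants C > 0 and θ = (1-ω)/ω where ω ∈ (0, 1/2]. Then there exist ω₁ > 0 and ω₂ ∈ [0,1) with Δ_k ≤ ω₁ ω₂^k, i.e. Δ_k converges to 0 at a linear rate. -/
theorem stmt_10 (Δ : ℕ → ℝ) (C ω : ℝ) (hC : 0 < C) (hω₁ : 0 < ω) (hω₂ : ω ≤ 1 / 2)
    (hnonneg : ∀ k, 0 ≤ Δ k) (hmono : ∀ k, Δ (k + 1) ≤ Δ k)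
    (hrec : ∀ k ≥ 1, Δ k ≤ (Δ (k - 1) - Δ k) + C * (Δ (k - 1) - Δ k) ^ ((1 - ω) / ω)) :
    ∃ ω₁ > (0 : ℝ), ∃ ω₂ : ℝ, 0 ≤ ω₂ ∧ ω₂ < 1 ∧ ∀ k, Δ k ≤ ω₁ * ω₂ ^ k := by
  set θ : ℝ := (1 - ω) / ω with hθdef
  have hθ1 : 1 ≤ θ := by
    rw [hθdef, le_div_iff₀ hω₁]
    linarith
  set A : ℝ := max (Δ 0) 1 with hA
  have hA1 : 1 ≤ A := le_max_right _ _
  have hA0 : 0 < A := lt_of_lt_of_le one_pos hA1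
  set K : ℝ := 1 + C * A ^ (θ - 1) with hK
  have hApow : 0 < A ^ (θ - 1) := Real.rpow_pos_of_pos hA0 _
  have hK1 : 1 < K := by
    have := mul_pos hC hApow
    rw [hK]; linarith
  have hK0 : 0 < K := lt_trans one_pos hK1
  set r : ℝ := K / (K + 1) with hr
  have hr0 : 0 ≤ r := le_of_lt (div_pos hK0 (by linarith))
  have hr1 : r < 1 := by
    rw [hr, div_lt_one (by linarith)]; linarith
  have hΔ0 : ∀ k, Δ k ≤ Δ 0 := by
    intro k
    induction k with
    | zero => exact le_refl _
    | succ n ih => exact le_trans (hmono n) ih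
  -- key one-step inequality
  have hstep : ∀ k, Δ (k + 1) ≤ r * Δ k := by
    intro k
    have h := hrec (k + 1) (Nat.le_add_left 1 k)
    simp only [Nat.add_sub_cancel] at h
    set d : ℝ := Δ k - Δ (k + 1) with hd
    have hd0 : 0 ≤ d := by rw [hd]; linarith [hmono k]
    have hdA : d ≤ A := by
      have : d ≤ Δ k := by
        have := hnonneg (k + 1); rw [hd]; linarith
      exact le_trans (le_trans this (hΔ0 k)) (le_max_left _ _)
    have hpow : d ^ θ ≤ d * A ^ (θ - 1) := by
      rcases eq_or_lt_of_le hd0 with h0 | h0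
      · rw [← h0, Real.zero_rpow (by linarith : θ ≠ 0)]
        positivity
      · have : d ^ θ = d * d ^ (θ - 1) := by
          rw [show θ = 1 + (θ - 1) by ring, Real.rpow_add h0, Real.rpow_one]
          norm_num
        rw [this]
        have : d ^ (θ - 1) ≤ A ^ (θ - 1) :=
          Real.rpow_le_rpow hd0 hdA (by linarith)
        nlinarith
    have hKd : Δ (k + 1) ≤ K * d := by
      calc Δ (k + 1) ≤ d + C * d ^ θ := h
        _ ≤ d + C * (d * A ^ (θ - 1)) := by nlinarith
        _ = K * d := by rw [hK]; ring
    -- Δ(k+1) ≤ K (Δ k - Δ(k+1))  ⇒  (K+1) Δ(k+1) ≤ K Δ k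
    rw [hr, div_mul_eq_mul_div, le_div_iff₀ (by linarith : (0:ℝ) < K + 1)]
    rw [hd] at hKd
    nlinarith
  refine ⟨Δ 0 + 1, by linarith [hnonneg 0], r, hr0, hr1, ?_⟩
  intro k
  have : Δ k ≤ Δ 0 * r ^ k := by
    induction k with
    | zero => simp
    | succ n ih =>
      calc Δ (n + 1) ≤ r * Δ n := hstep n
        _ ≤ r * (Δ 0 * r ^ n) := by nlinarith
        _ = Δ 0 * r ^ (n + 1) := by ring
  have hrk : 0 ≤ r ^ k := pow_nonneg hr0 k
  nlinarith [hnonneg 0]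
end
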